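/- Relaxed bathtub principle (uniqueness under null level sets): Let v ∈ L²(Ω) be such that every level set of v is Lebesgue-null, i.e. |{x ∈ Ω : v(x) = λ}| = 0 for all λ ∈ ℝ. Then the maximisation of u ↦ ∫_Ω u·v over Ū_L has the unique maximiser u* = χ_{{v > h(v)}} (up to a.e. equality), and the maximum value equals ∫_{{v > h(v)}} v. -/

import Mathlib

/-!
With `χ` the indicator of `{v > h}` and `0 ≤ u ≤ 1`, the product `(χ - u) (v - h)` is pointwise
nonnegative, and
`∫ χ v - ∫ u v = ∫ (χ - u) (v - h) + h (|{v > h}| - ∫ u)`.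
For `h = h(v)`, right continuity of `r ↦ |{v > r}|` gives `|{v > h}| ≤ A`; if `h > 0`, every
`r < h` has `|{v > r}| > A`, so continuity from above and `|{v = h}| = 0` give `|{v > h}| ≥ A`.
Hence the mass term is nonnegative whenever `∫ u ≤ A`, and `χ` is a maximiser. For a second
maximiser both terms vanish, so `(χ - u) (v - h) = 0` a.e. and `u = χ` off the null set `{v = h}`.
-/

open MeasureTheory Filter Set
open scoped ENNReal Topology

section Bathtub

variable {α : Type*} {u v : α → ℝ} {h : ℝ}

noncomputable def superlevelIndicator (v : α → ℝ) (h : ℝ) : α → ℝ := {x | h < v x}.indicator 1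

lemma superlevelIndicator_sub_mul_sub_nonneg {x : α} (hu : 0 ≤ u x ∧ u x ≤ 1) :
    0 ≤ (superlevelIndicator v h x - u x) * (v x - h) := by
  by_cases hx : h < v x
  · rw [superlevelIndicator, indicator_of_mem (show x ∈ {y | h < v y} from hx), Pi.one_apply]
    exact mul_nonneg (by linarith) (by linarith)
  · rw [superlevelIndicator, indicator_of_notMem (show x ∉ {y | h < v y} from hx)]
    exact mul_nonneg_of_nonpos_of_nonpos (by linarith) (by linarith)

lemma superlevelIndicator_mem_Icc (x : α) : superlevelIndicator v h x ∈ Icc 0 1 := by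
  unfold superlevelIndicator
  by_cases hx : h < v x <;> simp [hx]

lemma norm_superlevelIndicator_le_one (x : α) : ‖superlevelIndicator v h x‖ ≤ 1 := by
  obtain ⟨h0, h1⟩ := superlevelIndicator_mem_Icc (v := v) (h := h) x
  rwa [Real.norm_of_nonneg h0]

variable [MeasurableSpace α] {μ : Measure α}

lemma aestronglyMeasurable_superlevelIndicator (hv : AEMeasurable v μ) :
    AEStronglyMeasurable (superlevelIndicator v h) μ :=
  aestronglyMeasurable_const.indicator₀ (nullMeasurableSet_lt aemeasurable_const hv)

lemma integral_superlevelIndicator (hv : AEMeasurable v μ) :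
    ∫ x, superlevelIndicator v h x ∂μ = μ.real {x | h < v x} := by
  rw [superlevelIndicator, integral_indicator₀ (nullMeasurableSet_lt aemeasurable_const hv)]
  simp

lemma integral_superlevelIndicator_mul (hv : AEMeasurable v μ) :
    ∫ x, superlevelIndicator v h x * v x ∂μ = ∫ x in {x | h < v x}, v x ∂μ := by
  have : (fun x => superlevelIndicator v h x * v x) = {x | h < v x}.indicator v := by
    ext x; simp [superlevelIndicator, indicator_apply]
  rw [this]
  exact integral_indicator₀ (nullMeasurableSet_lt aemeasurable_const hv)

variable [IsFiniteMeasure μ]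

lemma integrable_superlevelIndicator_sub_mul_sub (hv : Integrable v μ)
    (hum : AEStronglyMeasurable u μ) (hu : ∀ᵐ x ∂μ, 0 ≤ u x ∧ u x ≤ 1) :
    Integrable (fun x => (superlevelIndicator v h x - u x) * (v x - h)) μ := by
  refine (hv.sub (integrable_const h)).bdd_mul
    ((aestronglyMeasurable_superlevelIndicator hv.aemeasurable).sub hum) (c := 1) ?_
  filter_upwards [hu] with x ⟨hu0, hu1⟩
  obtain ⟨hχ0, hχ1⟩ := superlevelIndicator_mem_Icc (v := v) (h := h) x
  rw [Real.norm_eq_abs, abs_le]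
  constructor <;> linarith

lemma integral_superlevelIndicator_mul_sub_integral_mul (hv : Integrable v μ)
    (hum : AEStronglyMeasurable u μ) (hu : ∀ᵐ x ∂μ, 0 ≤ u x ∧ u x ≤ 1) :
    ∫ x, superlevelIndicator v h x * v x ∂μ - ∫ x, u x * v x ∂μ =
      ∫ x, (superlevelIndicator v h x - u x) * (v x - h) ∂μ +
        h * (μ.real {x | h < v x} - ∫ x, u x ∂μ) := by
  have hχm := aestronglyMeasurable_superlevelIndicator (h := h) hv.aemeasurable
  have hχ_bound := ae_of_all μ (norm_superlevelIndicator_le_one (v := v) (h := h))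
  have hu_bound : ∀ᵐ x ∂μ, ‖u x‖ ≤ 1 :=
    hu.mono fun x hx => by rw [Real.norm_of_nonneg hx.1]; exact hx.2
  have hχi : Integrable (superlevelIndicator v h) μ := .of_bound hχm 1 hχ_bound
  have hui : Integrable u μ := .of_bound hum 1 hu_bound
  have hχvi := hv.bdd_mul hχm hχ_bound
  have huvi := hv.bdd_mul hum hu_bound
  have hdiff : Integrable (fun x => superlevelIndicator v h x * v x - u x * v x) μ :=
    hχvi.sub huvi
  have hshift : Integrable (fun x => h * (superlevelIndicator v h x - u x)) μ :=
    (hχi.sub hui).const_mul h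
  have hsplit : (fun x => (superlevelIndicator v h x - u x) * (v x - h)) =
      fun x => (superlevelIndicator v h x * v x - u x * v x) -
        h * (superlevelIndicator v h x - u x) := by
    ext x; ring
  rw [hsplit, integral_sub hdiff hshift, integral_sub hχvi huvi, integral_const_mul,
    integral_sub hχi hui, integral_superlevelIndicator hv.aemeasurable]
  ring

theorem integral_mul_le_integral_superlevelIndicator_mul (hv : Integrable v μ)
    (hum : AEStronglyMeasurable u μ) (hu : ∀ᵐ x ∂μ, 0 ≤ u x ∧ u x ≤ 1)
    (hmass : 0 ≤ h * (μ.real {x | h < v x} - ∫ x, u x ∂μ)) :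
    ∫ x, u x * v x ∂μ ≤ ∫ x, superlevelIndicator v h x * v x ∂μ := by
  have hgap := integral_superlevelIndicator_mul_sub_integral_mul (h := h) hv hum hu
  have hnonneg : 0 ≤ ∫ x, (superlevelIndicator v h x - u x) * (v x - h) ∂μ :=
    integral_nonneg_of_ae (hu.mono fun x hx => superlevelIndicator_sub_mul_sub_nonneg hx)
  linarith

theorem ae_eq_superlevelIndicator_of_integral_mul_eq (hv : Integrable v μ)
    (hum : AEStronglyMeasurable u μ) (hu : ∀ᵐ x ∂μ, 0 ≤ u x ∧ u x ≤ 1)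
    (hmass : 0 ≤ h * (μ.real {x | h < v x} - ∫ x, u x ∂μ)) (hlevel : μ {x | v x = h} = 0)
    (heq : ∫ x, u x * v x ∂μ = ∫ x, superlevelIndicator v h x * v x ∂μ) :
    u =ᵐ[μ] superlevelIndicator v h := by
  have hgap := integral_superlevelIndicator_mul_sub_integral_mul (h := h) hv hum hu
  have hpos : 0 ≤ᵐ[μ] fun x => (superlevelIndicator v h x - u x) * (v x - h) :=
    hu.mono fun x hx => superlevelIndicator_sub_mul_sub_nonneg hx
  have hzero : (fun x => (superlevelIndicator v h x - u x) * (v x - h)) =ᵐ[μ] 0 := by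
    refine (integral_eq_zero_iff_of_nonneg_ae hpos
      (integrable_superlevelIndicator_sub_mul_sub hv hum hu)).1 ?_
    linarith [integral_nonneg_of_ae hpos]
  filter_upwards [hzero, measure_eq_zero_iff_ae_notMem.1 hlevel] with x hx hxh
  rcases mul_eq_zero.1 hx with hχu | hvh
  · linarith
  · exact absurd (sub_eq_zero.1 hvh) hxh

end Bathtub

section Threshold

variable {α : Type*} [MeasurableSpace α] {μ : Measure α} {v : α → ℝ} {a A : ℝ}

lemma measure_superlevel_le_of_forall_gt {c : ℝ≥0∞} (hc : ∀ r, a < r → μ {x | r < v x} ≤ c) :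
    μ {x | a < v x} ≤ c := by
  have hunion : {x | a < v x} = ⋃ r : Ioi a, {x | (r : ℝ) < v x} := by
    ext x
    simp only [mem_iUnion, Subtype.exists, mem_Ioi, exists_prop]
    exact ⟨fun hx => exists_between hx, fun ⟨r, har, hrx⟩ => har.trans hrx⟩
  rw [hunion, Antitone.measure_iUnion (s := fun r : Ioi a => {x | (r : ℝ) < v x})
    fun r s hrs x hx => (Subtype.mono_coe _ hrs).trans_lt hx]
  exact iSup_le fun r => hc r r.2

/-- The paper's threshold `h(v) = max(0, Φ_v⁻¹(A))`. As `sInf ∅ = 0` in `ℝ`, it is the intended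
value only once the set is nonempty, which needs `0 < A` and a finite measure. -/
noncomputable def bathtubLevel (μ : Measure α) (v : α → ℝ) (A : ℝ) : ℝ :=
  max 0 (sInf {r | μ.real {x | r < v x} ≤ A})

lemma bathtubLevel_nonneg : 0 ≤ bathtubLevel μ v A := le_max_left _ _

lemma lt_measureReal_superlevel_of_lt_bathtubLevel (hpos : 0 < bathtubLevel μ v A) {r : ℝ}
    (hr : r < bathtubLevel μ v A) : A < μ.real {x | r < v x} := by
  have hinf : 0 < sInf {r | μ.real {x | r < v x} ≤ A} := by
    simpa [bathtubLevel] using hpos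
  have hbdd : BddBelow {r | μ.real {x | r < v x} ≤ A} := by
    by_contra hbdd
    rw [Real.sInf_of_not_bddBelow hbdd] at hinf
    exact hinf.false
  rw [bathtubLevel, max_eq_right hinf.le] at hr
  have hnot := notMem_of_lt_csInf hr hbdd
  exact not_le.1 hnot

variable [IsFiniteMeasure μ]

lemma le_measure_setOf_le_of_forall_lt (hv : AEMeasurable v μ)
    {c : ℝ≥0∞} (hc : ∀ r < a, c ≤ μ {x | r < v x}) : c ≤ μ {x | a ≤ v x} := by
  have hinter : {x | a ≤ v x} = ⋂ r : Iio a, {x | (r : ℝ) < v x} := by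
    ext x
    simp only [mem_iInter, Subtype.forall, mem_Iio]
    exact ⟨fun hx r hr => hr.trans_le hx, fun hx => le_of_forall_lt fun r hr => hx r hr⟩
  rw [hinter, Antitone.measure_iInter (s := fun r : Iio a => {x | (r : ℝ) < v x})
    (fun r s hrs x hx => (Subtype.mono_coe _ hrs).trans_lt hx)
    (fun r => nullMeasurableSet_lt aemeasurable_const hv) ⟨⟨a - 1, by simp⟩, measure_ne_top μ _⟩]
  exact le_iInf fun r => hc r r.2

lemma exists_measureReal_superlevel_le (hv : AEMeasurable v μ) (hA : 0 < A) :
    ∃ r, μ.real {x | r < v x} ≤ A := by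
  have hlim : Tendsto (fun r : ℝ => μ {x | r < v x}) atTop (𝓝 0) := by
    have hempty : ⋂ r : ℝ, {x | r < v x} = ∅ :=
      iInter_eq_empty_iff.2 fun x => ⟨v x, (lt_irrefl (v x) ·)⟩
    simpa [hempty, Function.comp_def] using
      tendsto_measure_iInter_atTop (μ := μ) (s := fun r : ℝ => {x | r < v x})
        (fun r => nullMeasurableSet_lt aemeasurable_const hv)
        (fun r s hrs x hx => hrs.trans_lt hx) ⟨0, measure_ne_top μ _⟩
  obtain ⟨r, hr⟩ := (hlim.eventually (gt_mem_nhds (ENNReal.ofReal_pos.2 hA))).exists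
  exact ⟨r, ENNReal.toReal_le_of_le_ofReal hA.le hr.le⟩

lemma measureReal_superlevel_le_of_bathtubLevel_lt (hv : AEMeasurable v μ)
    (hA : 0 < A) {r : ℝ} (hr : bathtubLevel μ v A < r) : μ.real {x | r < v x} ≤ A := by
  obtain ⟨s, hs, hsr⟩ :=
    exists_lt_of_csInf_lt (exists_measureReal_superlevel_le hv hA) ((le_max_right _ _).trans_lt hr)
  exact (measureReal_mono fun x hx => hsr.trans hx).trans hs

lemma measureReal_superlevel_bathtubLevel_le (hv : AEMeasurable v μ) (hA : 0 < A) :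
    μ.real {x | bathtubLevel μ v A < v x} ≤ A := by
  rw [measureReal_def, ← ENNReal.le_ofReal_iff_toReal_le (measure_ne_top μ _) hA.le]
  refine measure_superlevel_le_of_forall_gt fun r hr => ?_
  rw [ENNReal.le_ofReal_iff_toReal_le (measure_ne_top μ _) hA.le]
  exact measureReal_superlevel_le_of_bathtubLevel_lt hv hA hr

lemma le_measureReal_superlevel_bathtubLevel (hv : AEMeasurable v μ)
    (hlevel : μ {x | v x = bathtubLevel μ v A} = 0) (hpos : 0 < bathtubLevel μ v A) :
    A ≤ μ.real {x | bathtubLevel μ v A < v x} := by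
  have hle : ENNReal.ofReal A ≤ μ {x | bathtubLevel μ v A ≤ v x} :=
    le_measure_setOf_le_of_forall_lt hv fun r hr =>
      ENNReal.ofReal_le_of_le_toReal (lt_measureReal_superlevel_of_lt_bathtubLevel hpos hr).le
  have hae : {x | bathtubLevel μ v A ≤ v x} =ᵐ[μ] {x | bathtubLevel μ v A < v x} := by
    filter_upwards [measure_eq_zero_iff_ae_notMem.1 hlevel] with x hx
    exact propext (le_iff_lt_or_eq.trans (or_iff_left (Ne.symm hx)))
  rw [measureReal_def, ← measure_congr hae, ← ENNReal.ofReal_le_iff_le_toReal (measure_ne_top μ _)]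
  exact hle

lemma bathtubLevel_mul_sub_nonneg (hv : AEMeasurable v μ)
    (hlevel : μ {x | v x = bathtubLevel μ v A} = 0) {c : ℝ} (hc : c ≤ A) :
    0 ≤ bathtubLevel μ v A * (μ.real {x | bathtubLevel μ v A < v x} - c) := by
  rcases (bathtubLevel_nonneg (μ := μ) (v := v) (A := A)).eq_or_lt with hzero | hpos
  · rw [← hzero, zero_mul]
  · exact mul_nonneg hpos.le (by linarith [le_measureReal_superlevel_bathtubLevel hv hlevel hpos])

end Threshold

theorem relaxed_bathtub_uniqueness_general
    (d : ℕ)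
    (Ω : Set (Fin d → ℝ)) (hΩne : Ω.Nonempty) (hΩop : IsOpen Ω)
    (hΩbd : Bornology.IsBounded Ω)
    (L : ℝ) (hL : L ∈ Set.Ioo (0 : ℝ) 1)
    (μ : Measure (Fin d → ℝ)) (hμ : μ = volume.restrict Ω)
    (v : (Fin d → ℝ) → ℝ) (hv : MemLp v 2 μ)
    (hlevel : ∀ l : ℝ, μ {x | v x = l} = 0)
    (Φ : ℝ → ℝ) (hΦ : ∀ r : ℝ, Φ r = (μ {x | v x > r}).toReal)
    (Φinv : ℝ → ℝ) (hΦinv : ∀ s : ℝ, Φinv s = sInf {r : ℝ | Φ r ≤ s})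
    (A : ℝ) (hA : A = L * (volume Ω).toReal)
    (hvv : ℝ) (hhv : hvv = max 0 (Φinv A))
    (ustar : (Fin d → ℝ) → ℝ)
    (hustar : ustar = Set.indicator {y | v y > hvv} (fun _ => (1:ℝ))) :
    (MemLp ustar 2 μ ∧ (∀ᵐ x ∂μ, 0 ≤ ustar x ∧ ustar x ≤ 1) ∧
      (∫ x, ustar x ∂μ) ≤ A) ∧
    (∀ u : (Fin d → ℝ) → ℝ, MemLp u 2 μ →
      (∀ᵐ x ∂μ, 0 ≤ u x ∧ u x ≤ 1) → (∫ x, u x ∂μ) ≤ A →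
      (∫ x, u x * v x ∂μ) ≤ ∫ x, ustar x * v x ∂μ) ∧
    (∀ u : (Fin d → ℝ) → ℝ, MemLp u 2 μ →
      (∀ᵐ x ∂μ, 0 ≤ u x ∧ u x ≤ 1) → (∫ x, u x ∂μ) ≤ A →
      (∫ x, u x * v x ∂μ) = (∫ x, ustar x * v x ∂μ) →
      u =ᵐ[μ] ustar) ∧
    (∫ x, ustar x * v x ∂μ) = ∫ x in {y | v y > hvv}, v x ∂μ := by
  have hΩfin : volume Ω ≠ ∞ := hΩbd.measure_lt_top.ne
  have : IsFiniteMeasure μ := hμ ▸ isFiniteMeasure_restrict.2 hΩfin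
  have hA0 : 0 < A :=
    hA ▸ mul_pos hL.1 (ENNReal.toReal_pos (hΩop.measure_pos volume hΩne).ne' hΩfin)
  obtain rfl : ustar = superlevelIndicator v hvv := hustar
  obtain rfl : hvv = bathtubLevel μ v A := by
    simp only [hhv, hΦinv, hΦ, bathtubLevel, measureReal_def, gt_iff_lt]
  have hvm := hv.aestronglyMeasurable.aemeasurable
  have hvi := hv.integrable one_le_two
  have hmass (u : (Fin d → ℝ) → ℝ) (huA : ∫ x, u x ∂μ ≤ A) :=
    bathtubLevel_mul_sub_nonneg hvm (hlevel (bathtubLevel μ v A)) huA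
  refine ⟨⟨.of_bound (aestronglyMeasurable_superlevelIndicator hvm) 1
      (ae_of_all _ norm_superlevelIndicator_le_one), ae_of_all _ superlevelIndicator_mem_Icc, ?_⟩,
    fun u hu hu01 huA => integral_mul_le_integral_superlevelIndicator_mul hvi
      hu.aestronglyMeasurable hu01 (hmass u huA),
    fun u hu hu01 huA => ae_eq_superlevelIndicator_of_integral_mul_eq hvi
      hu.aestronglyMeasurable hu01 (hmass u huA) (hlevel _),
    integral_superlevelIndicator_mul hvm⟩
  rw [integral_superlevelIndicator hvm]
  exact measureReal_superlevel_bathtubLevel_le hvm hA0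

/-- Relaxed bathtub principle (uniqueness under null level sets): if all level sets
of `v` are Lebesgue-null, then `χ_{v>h(v)}` is the unique (up to a.e. equality)
maximiser of `u ↦ ∫ u v` over `Ū_L`, and the maximum value equals `∫_{v>h(v)} v`. -/
theorem relaxed_bathtub_uniqueness
    (d : ℕ) (hd : 1 ≤ d)
    (Ω : Set (Fin d → ℝ)) (hΩne : Ω.Nonempty) (hΩop : IsOpen Ω)
    (hΩbd : Bornology.IsBounded Ω)
    (L : ℝ) (hL : L ∈ Set.Ioo (0 : ℝ) 1)
    (μ : Measure (Fin d → ℝ)) (hμ : μ = volume.restrict Ω)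
    (v : (Fin d → ℝ) → ℝ) (hv : MemLp v 2 μ)
    (hlevel : ∀ l : ℝ, μ {x | v x = l} = 0)
    (Φ : ℝ → ℝ) (hΦ : ∀ r : ℝ, Φ r = (μ {x | v x > r}).toReal)
    (Φinv : ℝ → ℝ) (hΦinv : ∀ s : ℝ, Φinv s = sInf {r : ℝ | Φ r ≤ s})
    (A : ℝ) (hA : A = L * (volume Ω).toReal)
    (hvv : ℝ) (hhv : hvv = max 0 (Φinv A))
    (ustar : (Fin d → ℝ) → ℝ)
    (hustar : ustar = Set.indicator {y | v y > hvv} (fun _ => (1:ℝ))) :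
    (MemLp ustar 2 μ ∧ (∀ᵐ x ∂μ, 0 ≤ ustar x ∧ ustar x ≤ 1) ∧
      (∫ x, ustar x ∂μ) ≤ A) ∧
    (∀ u : (Fin d → ℝ) → ℝ, MemLp u 2 μ →
      (∀ᵐ x ∂μ, 0 ≤ u x ∧ u x ≤ 1) → (∫ x, u x ∂μ) ≤ A →
      (∫ x, u x * v x ∂μ) ≤ ∫ x, ustar x * v x ∂μ) ∧
    (∀ u : (Fin d → ℝ) → ℝ, MemLp u 2 μ →
      (∀ᵐ x ∂μ, 0 ≤ u x ∧ u x ≤ 1) → (∫ x, u x ∂μ) ≤ A →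
      (∫ x, u x * v x ∂μ) = (∫ x, ustar x * v x ∂μ) →
      u =ᵐ[μ] ustar) ∧
    (∫ x, ustar x * v x ∂μ) = ∫ x in {y | v y > hvv}, v x ∂μ :=
  relaxed_bathtub_uniqueness_general d Ω hΩne hΩop hΩbd L hL μ hμ v hv hlevel Φ hΦ Φinv hΦinv A hA
    hvv hhv ustar hustar
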